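/- arXiv:1503.00469 — 2 statements merged into one kernel-verified Lean document; each statement's English description precedes it below -/
import Mathlib

section
/- Let α ∈ (0,1) and R > 0, and let E_R = ℝ × (−R, R) ⊆ ℝ² be the straight band of width 2R. Then for every x ∈ ∂E_R the principal-value limit defining H_{E_R}(x) exists and H_{E_R}(x) = h_R, where h_R := −2 ∫_ℝ ( F(2R/|t|) − F(+∞) ) |t|^{−1−α} dt; this integral converges absolutely and h_R > 0. -/
open MeasureTheory Filter Topology Classical Real

/-- `τ_E = 1_E − 1_{E^c}` in the plane. -/
noncomputable def tauE (E : Set (EuclideanSpace ℝ (Fin 2))) (y : EuclideanSpace ℝ (Fin 2)) : ℝ :=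
  if y ∈ E then 1 else -1

/-- `F(q) = ∫_0^q (1+τ²)^{−(2+α)/2} dτ`. -/
noncomputable def Fa (α q : ℝ) : ℝ := ∫ τ in (0:ℝ)..q, (1 + τ ^ 2) ^ (-(2 + α) / 2)

/-- `F(+∞) = ∫_0^∞ (1+τ²)^{−(2+α)/2} dτ`. -/
noncomputable def FaInf (α : ℝ) : ℝ := ∫ τ in Set.Ioi (0:ℝ), (1 + τ ^ 2) ^ (-(2 + α) / 2)

/-!
Translate a boundary point `x` of the band to the origin. As `x` lies on one edge of the band, for
`z` off the horizontal axis exactly one of `x + z`, `x - z` lies in the band when `|z₂| < 2R`, and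
neither does when `|z₂| ≥ 2R`. Symmetrising under `z ↦ -z` therefore shows that the truncated
integral `∫_{|z| ≥ ε} τ(x + z) |z|^{-2-α} dz` equals `-∫_{|z₂| ≥ 2R} |z|^{-2-α} dz` for every
`ε ≤ 2R`, so the principal value is attained. Fubini, with the substitution `s = |t| τ` in the inner
integral, rewrites `∫_{|z₂| ≥ 2R} |z|^{-2-α} dz` as `2 ∫ (F(∞) - F(2R/|t|)) |t|^{-1-α} dt`; it is
positive as the integral of a positive function over a set with nonempty interior.
-/

open Set

lemma integrable_one_add_sq_rpow {α : ℝ} (hα : -1 < α) :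
    Integrable fun τ : ℝ => (1 + τ ^ 2) ^ (-(2 + α) / 2) := by
  simpa [sq_abs] using
    integrable_rpow_neg_one_add_norm_sq (E := ℝ) (r := 2 + α) (by simp; linarith)

lemma FaInf_sub_Fa {α : ℝ} (hα : -1 < α) {q : ℝ} (hq : 0 ≤ q) :
    FaInf α - Fa α q = ∫ τ in Ioi q, (1 + τ ^ 2) ^ (-(2 + α) / 2) := by
  have hint := integrable_one_add_sq_rpow hα
  rw [FaInf, Fa, intervalIntegral.integral_of_le hq, ← Ioc_union_Ioi_eq_Ioi hq,
    setIntegral_union (Ioc_disjoint_Ioi le_rfl) measurableSet_Ioi hint.integrableOn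
      hint.integrableOn, add_sub_cancel_left]

lemma sq_add_abs_mul_sq_rpow (α t u : ℝ) :
    (t ^ 2 + (|t| * u) ^ 2) ^ (-(2 + α) / 2) =
      |t| ^ (-(2 + α)) * (1 + u ^ 2) ^ (-(2 + α) / 2) := by
  rw [mul_pow, sq_abs, ← mul_one_add, Real.mul_rpow (by positivity) (by positivity), ← sq_abs,
    ← Real.rpow_natCast, ← Real.rpow_mul (abs_nonneg t)]
  norm_num [mul_div_cancel₀]

lemma integral_Ioi_sq_add_sq_rpow {α t : ℝ} (hα : -1 < α) (ht : t ≠ 0) {c : ℝ} (hc : 0 ≤ c) :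
    ∫ s in Ioi c, (t ^ 2 + s ^ 2) ^ (-(2 + α) / 2) =
      |t| ^ (-(1 + α)) * (FaInf α - Fa α (c / |t|)) := by
  have ht' : 0 < |t| := abs_pos.2 ht
  conv_lhs => rw [← mul_div_cancel₀ c ht'.ne', ← integral_comp_mul_left_Ioi' _ _ ht']
  rw [FaInf_sub_Fa hα (by positivity)]
  simp_rw [sq_add_abs_mul_sq_rpow, integral_const_mul, smul_eq_mul, ← mul_assoc]
  congr 1
  rw [← Real.rpow_one_add' ht'.le (by linarith)]
  ring_nf

lemma integral_indicator_abs_ge_sq_add_sq_rpow {α t : ℝ} (hα : -1 < α) (ht : t ≠ 0) {c : ℝ}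
    (hc : 0 < c) :
    ∫ s, {s : ℝ | c ≤ |s|}.indicator (fun s => (t ^ 2 + s ^ 2) ^ (-(2 + α) / 2)) s =
      -2 * ((Fa α (c / |t|) - FaInf α) * |t| ^ (-(1 + α))) := by
  have heven : ∀ s : ℝ,
      {s : ℝ | c ≤ |s|}.indicator (fun s => (t ^ 2 + s ^ 2) ^ (-(2 + α) / 2)) s =
        (Ici c).indicator (fun u => (t ^ 2 + u ^ 2) ^ (-(2 + α) / 2)) |s| := by
    intro s
    simp only [indicator, mem_ofPred_eq, mem_Ici, sq_abs]
  simp_rw [heven]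
  rw [integral_comp_abs, setIntegral_indicator measurableSet_Ici,
    inter_eq_right.2 (Ici_subset_Ioi.2 hc), integral_Ici_eq_integral_Ioi,
    integral_Ioi_sq_add_sq_rpow hα ht hc.le]
  ring

section Radial

variable {E : Type*} [NormedAddCommGroup E] [NormedSpace ℝ E] [FiniteDimensional ℝ E]
  [MeasurableSpace E] [BorelSpace E] [Nontrivial E] (μ : Measure E) [μ.IsAddHaarMeasure]

lemma integrableOn_norm_ge_rpow_neg {s ε : ℝ} (hs : (Module.finrank ℝ E : ℝ) < s)
    (hε : 0 < ε) :
    IntegrableOn (fun x : E => ‖x‖ ^ (-s)) {x | ε ≤ ‖x‖} μ := by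
  set d := Module.finrank ℝ E
  have hd : ((d - 1 : ℕ) : ℝ) = d - 1 := by rw [Nat.cast_sub Module.finrank_pos, Nat.cast_one]
  have hpow : IntegrableOn (fun y : ℝ => y ^ ((d : ℝ) - 1 - s)) (Ici ε) :=
    (integrableOn_Ici_iff_integrableOn_Ioi).2 (integrableOn_Ioi_rpow_of_lt (by linarith) hε)
  have hradial : IntegrableOn
      (fun y : ℝ => y ^ (d - 1) • (Ici ε).indicator (fun r => r ^ (-s)) y) (Ioi 0) := by
    refine (integrableOn_congr_fun (fun y (hy : 0 < y) => ?_) measurableSet_Ioi).2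
      ((integrable_indicator_iff measurableSet_Ici).2 hpow).integrableOn
    by_cases hyε : y ∈ Ici ε
    · rw [indicator_of_mem hyε, indicator_of_mem hyε, smul_eq_mul, ← Real.rpow_natCast, hd,
        ← Real.rpow_add hy, sub_eq_add_neg _ s]
    · rw [indicator_of_notMem hyε, indicator_of_notMem hyε, smul_zero]
  rw [← integrable_indicator_iff (measurableSet_le measurable_const measurable_norm)]
  exact (integrable_fun_norm_addHaar μ).2 hradial

end Radial

lemma setIntegral_dist_ge_eq_setIntegral_norm_ge {G : Type*} [NormedAddCommGroup G]
    [MeasurableSpace G] [BorelSpace G] (μ : Measure G) [μ.IsAddLeftInvariant] (x : G) (ε : ℝ)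
    (g : G → ℝ) :
    ∫ y in {y | ε ≤ dist y x}, g y ∂μ = ∫ z in {z | ε ≤ ‖z‖}, g (x + z) ∂μ := by
  rw [← (measurePreserving_add_left μ x).setIntegral_preimage_emb
    (measurableEmbedding_addLeft x) g]
  congr! 3
  ext z
  simp

lemma two_mul_setIntegral_eq_setIntegral_add_neg {G : Type*} [AddGroup G] [MeasurableSpace G]
    [MeasurableNeg G] (μ : Measure G) [μ.IsNegInvariant] {S : Set G} (hS : -S = S) {f : G → ℝ}
    (hf : IntegrableOn f S μ) :
    2 * ∫ x in S, f x ∂μ = ∫ x in S, (f x + f (-x)) ∂μ := by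
  have hpres := Measure.measurePreserving_neg μ
  have hemb := (MeasurableEquiv.neg G).measurableEmbedding
  have hS' : Neg.neg ⁻¹' S = S := hS
  have hf_neg : IntegrableOn (fun x => f (-x)) S μ := by
    simpa only [hS', Function.comp_def] using (hpres.integrableOn_comp_preimage hemb).2 hf
  have hint_neg : ∫ x in S, f (-x) ∂μ = ∫ x in S, f x ∂μ := by
    simpa only [hS'] using hpres.setIntegral_preimage_emb hemb f S
  rw [integral_add hf hf_neg, hint_neg, two_mul]

local notation "ℝ²" => EuclideanSpace ℝ (Fin 2)

def band (R : ℝ) : Set ℝ² := {p | -R < p 1 ∧ p 1 < R}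

lemma frontier_band_subset {R : ℝ} (hR : 0 < R) : frontier (band R) ⊆ {p | |p 1| = R} := by
  intro p hp
  have := (EuclideanSpace.proj (1 : Fin 2)).continuous.frontier_preimage_subset (Ioo (-R) R) hp
  rw [frontier_Ioo (by linarith)] at this
  rcases this with h | h <;> simp_all [abs_of_pos hR]

lemma ite_add_add_ite_sub_of_abs_eq {a b R : ℝ} (ha : |a| = R) (hb : b ≠ 0) :
    ((if -R < a + b ∧ a + b < R then 1 else -1) +
        (if -R < a - b ∧ a - b < R then 1 else -1) : ℝ) =
      if 2 * R ≤ |b| then -2 else 0 := by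
  split_ifs <;> grind [abs_choice]

lemma tauE_band_add_add_tauE_band_sub {R : ℝ} {x z : ℝ²} (hx : |x 1| = R) (hz : z 1 ≠ 0) :
    tauE (band R) (x + z) + tauE (band R) (x - z) = if 2 * R ≤ |z 1| then -2 else 0 := by
  -- `tauE` decides membership classically; the final `congr` reconciles the `Decidable` instances.
  convert ite_add_add_ite_sub_of_abs_eq hx hz using 2 <;>
    simp only [tauE, band, mem_ofPred_eq, PiLp.add_apply, PiLp.sub_apply] <;> congr

lemma ae_apply_ne_zero {ι : Type*} [Fintype ι] (i : ι) :
    ∀ᵐ z : EuclideanSpace ℝ ι, z i ≠ 0 := by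
  have hker : LinearMap.ker (EuclideanSpace.projₗ (𝕜 := ℝ) i) ≠ ⊤ := by
    intro h
    have := h ▸ Submodule.mem_top (x := EuclideanSpace.single i (1 : ℝ))
    simp at this
  rw [ae_iff]
  convert Measure.addHaar_submodule volume _ hker using 2
  ext z
  simp

lemma measurable_tauE {E : Set ℝ²} (hE : MeasurableSet E) : Measurable (tauE E) :=
  Measurable.ite hE measurable_const measurable_const

lemma norm_tauE_le (E : Set ℝ²) (y : ℝ²) : ‖tauE E y‖ ≤ 1 := by
  unfold tauE
  split_ifs <;> simp

lemma measurableSet_band (R : ℝ) : MeasurableSet (band R) :=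
  measurableSet_Ioo.preimage (by fun_prop : Measurable fun p : ℝ² => p 1)

lemma setIntegral_tauE_band {α R : ℝ} (hα : 0 < α) {x : ℝ²} (hx : |x 1| = R) {ε : ℝ}
    (hε : 0 < ε) (hε2 : ε ≤ 2 * R) :
    ∫ y in {y | ε ≤ dist y x}, tauE (band R) y * dist x y ^ (-(2 + α)) =
      -∫ z in {z : ℝ² | 2 * R ≤ |z 1|}, ‖z‖ ^ (-(2 + α)) := by
  set k : ℝ² → ℝ := fun z => ‖z‖ ^ (-(2 + α))
  set T : Set ℝ² := {z | ε ≤ ‖z‖}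
  set S : Set ℝ² := {z | 2 * R ≤ |z 1|}
  have hT : -T = T := by ext z; simp [T]
  have hST : S ⊆ T := fun z hz => hε2.trans (hz.trans (PiLp.norm_apply_le z 1))
  have hS : MeasurableSet S := measurableSet_le measurable_const (by fun_prop)
  have hint : IntegrableOn (fun z => tauE (band R) (x + z) * k z) T :=
    (integrableOn_norm_ge_rpow_neg volume (by simp; linarith) hε).bdd_mul
      ((measurable_tauE (measurableSet_band R)).comp (measurable_const_add x)).aestronglyMeasurable
      (Eventually.of_forall fun z => norm_tauE_le _ _)
  have hsym : ∀ᵐ z ∂(volume.restrict T),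
      tauE (band R) (x + z) * k z + tauE (band R) (x + -z) * k (-z) = -2 * S.indicator k z := by
    filter_upwards [ae_restrict_of_ae (ae_apply_ne_zero 1)] with z hz
    rw [← sub_eq_add_neg, show k (-z) = k z by simp [k], ← add_mul,
      tauE_band_add_add_tauE_band_sub hx hz]
    by_cases h : z ∈ S
    · simp [indicator_of_mem h, show 2 * R ≤ |z 1| from h]
    · simp [indicator_of_notMem h, show ¬2 * R ≤ |z 1| from h]
  calc ∫ y in {y | ε ≤ dist y x}, tauE (band R) y * dist x y ^ (-(2 + α))
      = ∫ z in T, tauE (band R) (x + z) * k z := by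
        simp only [setIntegral_dist_ge_eq_setIntegral_norm_ge, dist_self_add_right, k, T]
    _ = 2⁻¹ * ∫ z in T, (tauE (band R) (x + z) * k z + tauE (band R) (x + -z) * k (-z)) := by
        rw [← two_mul_setIntegral_eq_setIntegral_add_neg volume hT hint,
          inv_mul_cancel_left₀ two_ne_zero]
    _ = -∫ z in S, k z := by
        rw [integral_congr_ae hsym, integral_const_mul, setIntegral_indicator hS,
          inter_eq_right.2 hST]
        ring

def measurableEquivProd : ℝ² ≃ᵐ ℝ × ℝ :=
  (MeasurableEquiv.toLp 2 (Fin 2 → ℝ)).symm.trans MeasurableEquiv.finTwoArrow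

lemma measurePreserving_measurableEquivProd :
    MeasurePreserving measurableEquivProd volume (volume.prod volume) := by
  rw [← Measure.volume_eq_prod]
  exact (volume_preserving_finTwoArrow ℝ).comp
    (EuclideanSpace.volume_preserving_symm_measurableEquiv_toLp (Fin 2))

lemma norm_rpow_eq_sq_add_sq_rpow (z : ℝ²) (s : ℝ) :
    ‖z‖ ^ s = (z 0 ^ 2 + z 1 ^ 2) ^ (s / 2) := by
  rw [EuclideanSpace.norm_eq, Fin.sum_univ_two, Real.norm_eq_abs, Real.norm_eq_abs, sq_abs, sq_abs,
    Real.sqrt_eq_rpow, ← Real.rpow_mul (by positivity)]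
  ring_nf

lemma integrable_and_setIntegral_abs_apply_ge_eq {α c : ℝ} (hα : 0 < α) (hc : 0 < c) :
    Integrable (fun t : ℝ => (Fa α (c / |t|) - FaInf α) * |t| ^ (-(1 + α))) ∧
    ∫ z in {z : ℝ² | c ≤ |z 1|}, ‖z‖ ^ (-(2 + α)) =
      -2 * ∫ t : ℝ, (Fa α (c / |t|) - FaInf α) * |t| ^ (-(1 + α)) := by
  set S : Set ℝ² := {z | c ≤ |z 1|}
  have hS : MeasurableSet S := measurableSet_le measurable_const (by fun_prop)
  set K : ℝ × ℝ → ℝ :=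
    {p | c ≤ |p.2|}.indicator fun p => (p.1 ^ 2 + p.2 ^ 2) ^ (-(2 + α) / 2)
  have hKe : K ∘ measurableEquivProd = S.indicator fun z => ‖z‖ ^ (-(2 + α)) := by
    ext z
    simp only [Function.comp_apply, K, S, indicator, norm_rpow_eq_sq_add_sq_rpow]
    rfl
  have hK : Integrable K (volume.prod volume) := by
    rw [← measurePreserving_measurableEquivProd.integrable_comp_emb
      measurableEquivProd.measurableEmbedding, hKe, integrable_indicator_iff hS]
    exact (integrableOn_norm_ge_rpow_neg volume (by simp; linarith) hc).mono_set
      fun z hz => hz.trans (PiLp.norm_apply_le z 1)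
  have hinner : ∀ᵐ t : ℝ,
      ∫ s, K (t, s) = -2 * ((Fa α (c / |t|) - FaInf α) * |t| ^ (-(1 + α))) := by
    filter_upwards [compl_mem_ae_iff.2 (Real.volume_singleton (a := 0))] with t ht
    exact integral_indicator_abs_ge_sq_add_sq_rpow (by linarith) ht hc
  refine ⟨(integrable_const_mul_iff (isUnit_iff_ne_zero.2 (by norm_num : (-2 : ℝ) ≠ 0)) _).1
    (hK.integral_prod_left.congr hinner), ?_⟩
  rw [← integral_indicator hS, ← hKe, Function.comp_def,
    measurePreserving_measurableEquivProd.integral_comp',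
    integral_prod K hK, integral_congr_ae hinner, integral_const_mul]

lemma setIntegral_abs_apply_ge_pos {s c : ℝ} (hs : 2 < s) (hc : 0 < c) :
    0 < ∫ z in {z : ℝ² | c ≤ |z 1|}, ‖z‖ ^ (-s) := by
  have hsub : {z : ℝ² | c < z 1} ⊆
      (Function.support fun z : ℝ² => ‖z‖ ^ (-s)) ∩ {z | c ≤ |z 1|} := by
    intro z hz
    have hcz : c ≤ |z 1| := (le_abs_self _).trans' hz.le
    refine ⟨(Real.rpow_pos_of_pos ?_ _).ne', hcz⟩
    exact hc.trans_le (hcz.trans (PiLp.norm_apply_le z 1))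
  rw [setIntegral_pos_iff_support_of_nonneg_ae (Eventually.of_forall fun z => by positivity)
    ((integrableOn_norm_ge_rpow_neg volume (by simpa using hs) hc).mono_set
      fun z hz => hz.trans (PiLp.norm_apply_le z 1))]
  refine lt_of_lt_of_le ?_ (measure_mono hsub)
  exact (isOpen_lt continuous_const (by fun_prop)).measure_pos volume
    ⟨EuclideanSpace.single 1 (c + 1), by simp⟩

/-- **The straight band has constant positive nonlocal mean curvature.** For the band
`E_R = ℝ × (−R,R) ⊆ ℝ²`, at every `x ∈ ∂E_R` the principal value defining `H_{E_R}(x)` exists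
and equals `h_R = −2 ∫_ℝ (F(2R/|t|) − F(∞)) |t|^{−1−α} dt`; this integral converges absolutely
and `h_R > 0`. -/
theorem nmc_of_straight_band
    (α R : ℝ) (hα : α ∈ Set.Ioo (0:ℝ) 1) (hR : 0 < R)
    (E : Set (EuclideanSpace ℝ (Fin 2)))
    (hE : E = {p : EuclideanSpace ℝ (Fin 2) | -R < p 1 ∧ p 1 < R}) :
    Integrable (fun t : ℝ => (Fa α (2 * R / |t|) - FaInf α) * |t| ^ (-(1 + α))) ∧
    0 < -2 * ∫ t : ℝ, (Fa α (2 * R / |t|) - FaInf α) * |t| ^ (-(1 + α)) ∧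
    ∀ x ∈ frontier E,
      Tendsto (fun ε : ℝ => -∫ y in {y | ε ≤ dist y x}, tauE E y * dist x y ^ (-(2 + α)))
        (𝓝[>] (0:ℝ))
        (𝓝 (-2 * ∫ t : ℝ, (Fa α (2 * R / |t|) - FaInf α) * |t| ^ (-(1 + α)))) := by
  obtain rfl : E = band R := hE
  have h2R : 0 < 2 * R := by linarith
  obtain ⟨hint, htail⟩ := integrable_and_setIntegral_abs_apply_ge_eq hα.1 h2R
  refine ⟨hint, htail ▸ setIntegral_abs_apply_ge_pos (by linarith [hα.1]) h2R, fun x hx => ?_⟩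
  rw [← htail]
  refine tendsto_const_nhds.congr' ?_
  filter_upwards [Ioc_mem_nhdsGT h2R] with ε hε
  rw [setIntegral_tauE_band hα.1 (frontier_band_subset hR hx) hε.1 hε.2, neg_neg]
end

section
/- Let λ > 0, R > 0, a ≠ 0, and let v : ℝ → ℝ be a continuous, even, 2π-periodic function with ∫_0^{2π} v(σ) cos σ dσ = 0. Define u : ℝ → ℝ by u(s) = λR + a ( cos s + v(s) ). Then u is 2π-periodic, and 2π is its minimal period: every T > 0 with u(s + T) = u(s) for all s ∈ ℝ is an integer multiple of 2π. -/
/-! If `T` is a period of `u`, it is a period of `w = cos + v`. Translating by `T` inside the first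
Fourier coefficient gives `∫ w cos = cos T ∫ w cos + sin T ∫ w sin` over `[0, 2π]`; evenness kills
`∫ w sin`, and orthogonality gives `∫ w cos = ∫ cos² = π ≠ 0`, so `cos T = 1`. -/

open Real

namespace Function

variable {E : Type*} [NormedAddCommGroup E] [NormedSpace ℝ E] {f : ℝ → E}

theorem Periodic.intervalIntegral_comp_add_right {c : ℝ} (hf : Periodic f c) (t : ℝ) :
    ∫ x in 0..c, f (x + t) = ∫ x in 0..c, f x := by
  rw [intervalIntegral.integral_comp_add_right, zero_add, add_comm, hf.intervalIntegral_add_eq t 0,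
    zero_add]

theorem Odd.intervalIntegral_eq_zero (hf : Function.Odd f) (a : ℝ) : ∫ x in -a..a, f x = 0 := by
  have h := intervalIntegral.integral_comp_neg (a := -a) (b := a) f
  simp only [hf _, intervalIntegral.integral_neg, neg_neg] at h
  have h2 : (2 : ℝ) • ∫ x in -a..a, f x = 0 := by
    rw [two_smul]
    nth_rw 1 [← h]
    exact neg_add_cancel _
  exact (smul_eq_zero.mp h2).resolve_left two_ne_zero

theorem Periodic.intervalIntegral_eq_zero_of_odd {c : ℝ} (hper : Periodic f c)
    (hodd : Function.Odd f) : ∫ x in 0..c, f x = 0 := by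
  rw [← zero_add c, hper.intervalIntegral_add_eq 0 (-(c / 2)),
    ← hodd.intervalIntegral_eq_zero (c / 2)]
  ring_nf

end Function

open Function MeasureTheory

theorem integral_mul_sin_eq_zero_of_even {f : ℝ → ℝ} (hper : Periodic f (2 * π))
    (heven : Function.Even f) : ∫ x in 0..2 * π, f x * sin x = 0 :=
  (hper.mul sin_periodic).intervalIntegral_eq_zero_of_odd (heven.mul_odd fun x => sin_neg x)

theorem integral_comp_add_right_mul_cos {f : ℝ → ℝ}
    (hint : IntervalIntegrable f volume 0 (2 * π)) (hper : Periodic f (2 * π))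
    (t : ℝ) :
    ∫ x in 0..2 * π, f (x + t) * cos x =
      cos t * (∫ x in 0..2 * π, f x * cos x) + sin t * ∫ x in 0..2 * π, f x * sin x := by
  have hshift := (hper.mul (cos_periodic.sub_const t)).intervalIntegral_comp_add_right t
  simp only [Pi.mul_apply, add_sub_cancel_right] at hshift
  have hexpand : ∀ x, f x * cos (x - t) = cos t * (f x * cos x) + sin t * (f x * sin x) := by
    intro x
    rw [cos_sub]
    ring
  rw [hshift]
  simp only [hexpand]
  rw [intervalIntegral.integral_add
      ((hint.mul_continuousOn continuous_cos.continuousOn).const_mul _)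
      ((hint.mul_continuousOn continuous_sin.continuousOn).const_mul _),
    intervalIntegral.integral_const_mul, intervalIntegral.integral_const_mul]

theorem cos_eq_one_of_periodic_of_integral_mul_cos_ne_zero {w : ℝ → ℝ} {T : ℝ}
    (hint : IntervalIntegrable w volume 0 (2 * π)) (heven : Function.Even w)
    (h2π : Periodic w (2 * π)) (hT : Periodic w T)
    (hcos : ∫ x in 0..2 * π, w x * cos x ≠ 0) : cos T = 1 := by
  have h := integral_comp_add_right_mul_cos hint h2π T
  simp only [hT _, integral_mul_sin_eq_zero_of_even h2π heven, mul_zero, add_zero] at h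
  exact (mul_eq_right₀ hcos).mp h.symm

theorem exists_nat_eq_mul_two_pi_of_cos_eq_one {T : ℝ} (hT : 0 < T) (h : cos T = 1) :
    ∃ n : ℕ, T = n * (2 * π) := by
  obtain ⟨n, rfl⟩ := (cos_eq_one_iff T).mp h
  have hn : 0 ≤ n := by
    have := pos_of_mul_pos_left hT (by positivity)
    exact_mod_cast this.le
  lift n to ℕ using hn
  exact ⟨n, by simp⟩

theorem integral_cos_add_mul_cos {v : ℝ → ℝ}
    (hv : IntervalIntegrable v volume 0 (2 * π))
    (hOrth : ∫ x in 0..2 * π, v x * cos x = 0) :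
    ∫ x in 0..2 * π, (cos x + v x) * cos x = π := by
  simp_rw [add_mul, ← sq]
  rw [intervalIntegral.integral_add, hOrth, integral_cos_sq]
  · simp
  · exact (continuous_cos.pow 2).intervalIntegrable _ _
  · exact hv.mul_continuousOn continuous_cos.continuousOn

theorem minimal_period_of_perturbed_cosine_general
    (lam R a : ℝ) (ha : a ≠ 0)
    (v : ℝ → ℝ) (hv : Continuous v) (hEven : ∀ s, v (-s) = v s)
    (hPer : Function.Periodic v (2 * π))
    (hOrth : ∫ σ in (0:ℝ)..(2 * π), v σ * Real.cos σ = 0) :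
    Function.Periodic (fun s => lam * R + a * (Real.cos s + v s)) (2 * π) ∧
    ∀ T : ℝ, 0 < T →
      (∀ s : ℝ, lam * R + a * (Real.cos (s + T) + v (s + T)) =
        lam * R + a * (Real.cos s + v s)) →
      ∃ n : ℕ, T = n * (2 * π) := by
  have hw2π : Periodic (fun s => cos s + v s) (2 * π) := cos_periodic.add hPer
  refine ⟨hw2π.comp fun y => lam * R + a * y, fun T hT hu => ?_⟩
  have hwT : Periodic (fun s => cos s + v s) T := fun s =>
    mul_left_cancel₀ ha (add_left_cancel (hu s))
  have hwEven : Function.Even fun s => cos s + v s := fun s => by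
    simp only [cos_neg, hEven s]
  have hwcos : ∫ x in 0..2 * π, (cos x + v x) * cos x ≠ 0 := by
    rw [integral_cos_add_mul_cos (hv.intervalIntegrable _ _) hOrth]
    exact pi_ne_zero
  exact exists_nat_eq_mul_two_pi_of_cos_eq_one hT <|
    cos_eq_one_of_periodic_of_integral_mul_cos_ne_zero
      ((continuous_cos.add hv).intervalIntegrable _ _) hwEven hw2π hwT hwcos

/-- **Minimal period of the perturbed cosine profile.** Let `λ > 0`, `R > 0`, `a ≠ 0` and let
`v` be continuous, even, `2π`-periodic with `∫_0^{2π} v(σ) cos σ dσ = 0`. Then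
`u(s) = λR + a(cos s + v(s))` is `2π`-periodic and `2π` is its minimal period: every `T > 0`
with `u(s+T) = u(s)` for all `s` is an integer multiple of `2π`. -/
theorem minimal_period_of_perturbed_cosine
    (lam R a : ℝ) (hlam : 0 < lam) (hR : 0 < R) (ha : a ≠ 0)
    (v : ℝ → ℝ) (hv : Continuous v) (hEven : ∀ s, v (-s) = v s)
    (hPer : Function.Periodic v (2 * π))
    (hOrth : ∫ σ in (0:ℝ)..(2 * π), v σ * Real.cos σ = 0) :
    Function.Periodic (fun s => lam * R + a * (Real.cos s + v s)) (2 * π) ∧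
    ∀ T : ℝ, 0 < T →
      (∀ s : ℝ, lam * R + a * (Real.cos (s + T) + v (s + T)) =
        lam * R + a * (Real.cos s + v s)) →
      ∃ n : ℕ, T = n * (2 * π) :=
  minimal_period_of_perturbed_cosine_general lam R a ha v hv hEven hPer hOrth
end
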